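/- Let G = (V,E) be a finite simple graph of order n, size m, maximum degree Δ and minimum degree δ, and let k be an integer with k ≠ Δ and k ≠ δ. Suppose V is partitioned into two boundary defensive k-alliances S and V∖S, and let M be the set of edges of G with one endpoint in S and the other in V∖S. Then ⌈(2m - kn)/(2(Δ-k))⌉ ≤ |S| ≤ ⌊(2m - kn)/(2(δ-k))⌋ and 4|M| = 2m - kn. -/

import Mathlib

open Finset

variable {V : Type*}

/-- `degIn G S v` is the number of neighbors that `v` has in `S` (denoted `δ_S(v)`). -/
def degIn [Fintype V] [DecidableEq V] (G : SimpleGraph V) [DecidableRel G.Adj]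
    (S : Finset V) (v : V) : ℕ :=
  (G.neighborFinset v ∩ S).card

/-- A nonempty set `S` is a defensive `k`-alliance in `G` if every vertex of `S` has at least
`k` more neighbors inside `S` than outside. -/
def IsDefensiveKAlliance [Fintype V] [DecidableEq V] (G : SimpleGraph V) [DecidableRel G.Adj]
    (k : ℤ) (S : Finset V) : Prop :=
  S.Nonempty ∧ ∀ v ∈ S, (degIn G Sᶜ v : ℤ) + k ≤ (degIn G S v : ℤ)

/-- The defensive `k`-alliance number: minimum cardinality of a defensive `k`-alliance. -/
noncomputable def defensiveAllianceNum [Fintype V] [DecidableEq V] (G : SimpleGraph V)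
    [DecidableRel G.Adj] (k : ℤ) : ℕ :=
  sInf {m : ℕ | ∃ S : Finset V, IsDefensiveKAlliance G k S ∧ S.card = m}

/-- A nonempty set `S` is a boundary defensive `k`-alliance in `G` if every vertex of `S` has
exactly `k` more neighbors inside `S` than outside. -/
def IsBoundaryDefensiveKAlliance [Fintype V] [DecidableEq V] (G : SimpleGraph V)
    [DecidableRel G.Adj] (k : ℤ) (S : Finset V) : Prop :=
  S.Nonempty ∧ ∀ v ∈ S, (degIn G S v : ℤ) = (degIn G Sᶜ v : ℤ) + k

/-! For `v ∈ S` the alliance condition and `δ_S(v) + δ_{V∖S}(v) = deg v` give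
`deg v - k = 2 δ_{V∖S}(v)`. Summing over `S` counts every edge of the cut `M` exactly once from
its endpoint in `S`, so `∑_{v ∈ S} (deg v - k) = 2|M|`, and likewise for `V∖S`; adding the two and
using the handshake lemma gives `4|M| = 2m - kn`. Bounding `deg v` by `δ` and `Δ` in the sum over
`S` gives `|S|(δ - k) ≤ 2|M| ≤ |S|(Δ - k)`, and `k < δ ≤ Δ` because `deg v - k ≥ 0` at every
vertex and `k ≠ δ`. -/

section

variable [Fintype V] [DecidableEq V] (G : SimpleGraph V) [DecidableRel G.Adj]

lemma degIn_add_degIn_compl (S : Finset V) (v : V) :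
    degIn G S v + degIn G Sᶜ v = G.degree v := by
  rw [degIn, degIn, ← sdiff_eq_inter_compl, card_inter_add_card_sdiff,
    SimpleGraph.card_neighborFinset_eq_degree]

lemma card_interedges_eq_sum_degIn (S T : Finset V) :
    #(G.interedges S T) = ∑ v ∈ S, degIn G T v := by
  rw [SimpleGraph.interedges, Rel.interedges_eq_biUnion, card_biUnion]
  · refine sum_congr rfl fun v _ => ?_
    rw [card_map, degIn]
    congr 1
    ext
    simp [and_comm]
  · intro v _ w _ hvw
    simp only [disjoint_left, mem_map, Function.Embedding.coeFn_mk]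
    rintro _ ⟨_, _, rfl⟩ ⟨_, _, h⟩
    exact hvw (Prod.ext_iff.mp h).1.symm

def cutEdges (S : Finset V) : Finset (Sym2 V) :=
  G.edgeFinset.filter fun e => (∃ v ∈ e, v ∈ S) ∧ ∃ v ∈ e, v ∉ S

lemma cutEdges_compl (S : Finset V) : cutEdges G Sᶜ = cutEdges G S := by
  unfold cutEdges
  refine filter_congr fun e _ => ?_
  simp only [mem_compl, not_not]
  exact and_comm

lemma image_interedges_compl_eq_cutEdges (S : Finset V) :
    (G.interedges S Sᶜ).image (fun p => s(p.1, p.2)) = cutEdges G S := by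
  ext e
  induction e using Sym2.ind with
  | h a b =>
    simp only [mem_image, SimpleGraph.mem_interedges_iff, mem_compl, Prod.exists, cutEdges,
      mem_filter, SimpleGraph.mem_edgeFinset, SimpleGraph.mem_edgeSet, Sym2.mem_iff,
      exists_eq_or_imp, exists_eq_left, Sym2.eq_iff]
    constructor
    · rintro ⟨x, y, ⟨hx, hy, hxy⟩, ⟨rfl, rfl⟩ | ⟨rfl, rfl⟩⟩
      · exact ⟨hxy, .inl hx, .inr hy⟩
      · exact ⟨hxy.symm, .inr hx, .inl hy⟩
    · rintro ⟨hab, hS, hSc⟩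
      by_cases ha : a ∈ S
      · exact ⟨a, b, ⟨ha, hSc.resolve_left (not_not.mpr ha), hab⟩, .inl ⟨rfl, rfl⟩⟩
      · exact ⟨b, a, ⟨hS.resolve_left ha, ha, hab.symm⟩, .inr ⟨rfl, rfl⟩⟩

lemma card_cutEdges (S : Finset V) : #(cutEdges G S) = ∑ v ∈ S, degIn G Sᶜ v := by
  rw [← image_interedges_compl_eq_cutEdges, card_image_of_injOn, card_interedges_eq_sum_degIn]
  rintro ⟨a, b⟩ hab ⟨c, d⟩ hcd h
  rw [mem_coe, SimpleGraph.mem_interedges_iff] at hab hcd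
  rcases Sym2.eq_iff.mp h with ⟨rfl, rfl⟩ | ⟨rfl, rfl⟩
  · rfl
  · exact absurd hab.1 (mem_compl.mp hcd.2.1)

end

namespace IsBoundaryDefensiveKAlliance

variable [Fintype V] [DecidableEq V] {G : SimpleGraph V} [DecidableRel G.Adj] {k : ℤ}
  {S : Finset V}

lemma degree_eq (hS : IsBoundaryDefensiveKAlliance G k S) {v : V} (hv : v ∈ S) :
    (G.degree v : ℤ) = 2 * degIn G Sᶜ v + k := by
  have := degIn_add_degIn_compl G S v
  have := hS.2 v hv
  omega

lemma le_degree (hS : IsBoundaryDefensiveKAlliance G k S) {v : V} (hv : v ∈ S) :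
    k ≤ G.degree v := by
  have := hS.degree_eq hv
  omega

lemma sum_degree_sub (hS : IsBoundaryDefensiveKAlliance G k S) :
    ∑ v ∈ S, ((G.degree v : ℤ) - k) = 2 * #(cutEdges G S) := by
  rw [card_cutEdges, Nat.cast_sum, mul_sum]
  exact sum_congr rfl fun v hv => by rw [hS.degree_eq hv]; ring

lemma card_mul_minDegree_sub_le (hS : IsBoundaryDefensiveKAlliance G k S) :
    (#S : ℤ) * (G.minDegree - k) ≤ 2 * #(cutEdges G S) := by
  rw [← hS.sum_degree_sub, ← nsmul_eq_mul]
  exact card_nsmul_le_sum _ _ _ fun v _ => by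
    have := G.minDegree_le_degree v
    omega

lemma two_mul_card_cutEdges_le (hS : IsBoundaryDefensiveKAlliance G k S) :
    2 * #(cutEdges G S) ≤ (#S : ℤ) * (G.maxDegree - k) := by
  rw [← hS.sum_degree_sub, ← nsmul_eq_mul]
  exact sum_le_card_nsmul _ _ _ fun v _ => by
    have := G.degree_le_maxDegree v
    omega

lemma four_mul_card_cutEdges (hS : IsBoundaryDefensiveKAlliance G k S)
    (hSc : IsBoundaryDefensiveKAlliance G k Sᶜ) :
    4 * (#(cutEdges G S) : ℤ) = 2 * #G.edgeFinset - k * Fintype.card V := by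
  have hSc_sum := hSc.sum_degree_sub
  rw [cutEdges_compl] at hSc_sum
  calc 4 * (#(cutEdges G S) : ℤ)
      = ∑ v ∈ S, ((G.degree v : ℤ) - k) + ∑ v ∈ Sᶜ, ((G.degree v : ℤ) - k) := by
        rw [hS.sum_degree_sub, hSc_sum]; ring
    _ = ∑ v, ((G.degree v : ℤ) - k) := sum_add_sum_compl S _
    _ = 2 * #G.edgeFinset - k * Fintype.card V := by
        rw [sum_sub_distrib, ← Nat.cast_sum, G.sum_degrees_eq_twice_card_edges, sum_const,
          card_univ, nsmul_eq_mul]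
        push_cast
        ring

lemma le_minDegree (hS : IsBoundaryDefensiveKAlliance G k S)
    (hSc : IsBoundaryDefensiveKAlliance G k Sᶜ) : k ≤ G.minDegree := by
  have : Nonempty V := hS.1.to_subtype.map Subtype.val
  obtain ⟨v, hv⟩ := G.exists_minimal_degree_vertex
  rw [hv]
  by_cases h : v ∈ S
  · exact hS.le_degree h
  · exact hSc.le_degree (mem_compl.mpr h)

end IsBoundaryDefensiveKAlliance

theorem partition_two_boundaryDefensiveKAlliances_general [Fintype V] [DecidableEq V]
    (G : SimpleGraph V) [DecidableRel G.Adj] (k : ℤ)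
    (hkd : k ≠ (G.minDegree : ℤ))
    (S : Finset V) (hS : IsBoundaryDefensiveKAlliance G k S)
    (hSc : IsBoundaryDefensiveKAlliance G k Sᶜ)
    (M : Finset (Sym2 V))
    (hM : M = G.edgeFinset.filter fun e => (∃ v ∈ e, v ∈ S) ∧ ∃ v ∈ e, v ∉ S) :
    ⌈(2 * (G.edgeFinset.card : ℚ) - (k : ℚ) * (Fintype.card V : ℚ)) /
        (2 * ((G.maxDegree : ℚ) - (k : ℚ)))⌉ ≤ (S.card : ℤ) ∧
      (S.card : ℤ) ≤ ⌊(2 * (G.edgeFinset.card : ℚ) - (k : ℚ) * (Fintype.card V : ℚ)) /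
        (2 * ((G.minDegree : ℚ) - (k : ℚ)))⌋ ∧
      4 * (M.card : ℤ) = 2 * (G.edgeFinset.card : ℤ) - k * (Fintype.card V : ℤ) := by
  obtain rfl : M = cutEdges G S := hM
  have hcut := hS.four_mul_card_cutEdges hSc
  have hδ : k < G.minDegree := (hS.le_minDegree hSc).lt_of_ne hkd
  have hΔ : k < G.maxDegree := hδ.trans_le (mod_cast G.minDegree_le_maxDegree)
  refine ⟨?_, ?_, hcut⟩
  · rw [Int.ceil_le, div_le_iff₀ (mul_pos two_pos (sub_pos.mpr (mod_cast hΔ)))]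
    have := hS.two_mul_card_cutEdges_le
    exact_mod_cast (by linarith : 2 * (#G.edgeFinset : ℤ) - k * Fintype.card V ≤
      #S * (2 * (G.maxDegree - k)))
  · rw [Int.le_floor, le_div_iff₀ (mul_pos two_pos (sub_pos.mpr (mod_cast hδ)))]
    have := hS.card_mul_minDegree_sub_le
    exact_mod_cast (by linarith : (#S : ℤ) * (2 * (G.minDegree - k)) ≤
      2 * #G.edgeFinset - k * Fintype.card V)

/-- Theorem: if `V` is partitioned into two boundary defensive `k`-alliances `S` and `V∖S`
(with `k ≠ Δ`, `k ≠ δ`), and `M` is the set of edges between `S` and `V∖S`, then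
`⌈(2m-kn)/(2(Δ-k))⌉ ≤ |S| ≤ ⌊(2m-kn)/(2(δ-k))⌋` and `4|M| = 2m - kn`. -/
theorem partition_two_boundaryDefensiveKAlliances [Fintype V] [DecidableEq V] [Nonempty V]
    (G : SimpleGraph V) [DecidableRel G.Adj] (k : ℤ)
    (hkD : k ≠ (G.maxDegree : ℤ)) (hkd : k ≠ (G.minDegree : ℤ))
    (S : Finset V) (hS : IsBoundaryDefensiveKAlliance G k S)
    (hSc : IsBoundaryDefensiveKAlliance G k Sᶜ)
    (M : Finset (Sym2 V))
    (hM : M = G.edgeFinset.filter fun e => (∃ v ∈ e, v ∈ S) ∧ ∃ v ∈ e, v ∉ S) :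
    ⌈(2 * (G.edgeFinset.card : ℚ) - (k : ℚ) * (Fintype.card V : ℚ)) /
        (2 * ((G.maxDegree : ℚ) - (k : ℚ)))⌉ ≤ (S.card : ℤ) ∧
      (S.card : ℤ) ≤ ⌊(2 * (G.edgeFinset.card : ℚ) - (k : ℚ) * (Fintype.card V : ℚ)) /
        (2 * ((G.minDegree : ℚ) - (k : ℚ)))⌋ ∧
      4 * (M.card : ℤ) = 2 * (G.edgeFinset.card : ℤ) - k * (Fintype.card V : ℤ) :=
  partition_two_boundaryDefensiveKAlliances_general G k hkd S hS hSc M hM
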